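/- arXiv:1507.04118 — 4 statements merged into one kernel-verified Lean document; each statement's English description precedes it below -/
import Mathlib

section
/- Let 0 < ρ ≤ 1 and let p, q ∈ (1/4, 3/4). Then the Kullback-Leibler divergence K(ρp, ρq) between two Bernoulli distributions with success probabilities ρp and ρq satisfies K(ρp, ρq) ≤ (16/3) ρ (q - p)^2. -/
/-- Kullback–Leibler divergence bound for Bernoulli distributions with scaled parameters:
K(ρp, ρq) ≤ (16/3) ρ (q-p)². -/
theorem stmt_2 (ρ p q : ℝ) (hρ : 0 < ρ) (hρ1 : ρ ≤ 1)
    (hp : p ∈ Set.Ioo (1/4 : ℝ) (3/4)) (hq : q ∈ Set.Ioo (1/4 : ℝ) (3/4)) :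
    ρ * q * Real.log (q / p) + (1 - ρ * q) * Real.log ((1 - ρ * q) / (1 - ρ * p))
      ≤ 16 / 3 * ρ * (q - p) ^ 2 := by
  obtain ⟨hp1, hp2⟩ := hp
  obtain ⟨hq1, hq2⟩ := hq
  have hp0 : 0 < p := by linarith
  have hq0 : 0 < q := by linarith
  have hρp : ρ * p < 1 := by nlinarith
  have hρq : ρ * q < 1 := by nlinarith
  have hden : 0 < 1 - ρ * p := by linarith
  have hdenq : 0 < 1 - ρ * q := by linarith
  have h1 : Real.log (q / p) ≤ q / p - 1 :=
    Real.log_le_sub_one_of_pos (by positivity)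
  have h2 : Real.log ((1 - ρ * q) / (1 - ρ * p)) ≤ (1 - ρ * q) / (1 - ρ * p) - 1 :=
    Real.log_le_sub_one_of_pos (by positivity)
  have e1 : ρ * q * Real.log (q / p) ≤ ρ * q * (q / p - 1) :=
    mul_le_mul_of_nonneg_left h1 (by positivity)
  have e2 : (1 - ρ * q) * Real.log ((1 - ρ * q) / (1 - ρ * p))
      ≤ (1 - ρ * q) * ((1 - ρ * q) / (1 - ρ * p) - 1) :=
    mul_le_mul_of_nonneg_left h2 (by positivity)
  have key : ρ * q * (q / p - 1) + (1 - ρ * q) * ((1 - ρ * q) / (1 - ρ * p) - 1)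
      = ρ * (q - p) ^ 2 / (p * (1 - ρ * p)) := by
    field_simp
    ring
  have hρpp : ρ * p ≤ p := by nlinarith
  have h3 : 0 < (p - 1/4) * (3/4 - p) := mul_pos (by linarith) (by linarith)
  have hD : (3 : ℝ) / 16 ≤ p * (1 - ρ * p) := by nlinarith
  have hfin : ρ * (q - p) ^ 2 / (p * (1 - ρ * p)) ≤ 16 / 3 * ρ * (q - p) ^ 2 := by
    rw [div_le_iff₀ (by positivity)]
    nlinarith [sq_nonneg (q - p), mul_nonneg (le_of_lt hρ) (sq_nonneg (q - p))]
  linarith [e1, e2, key ▸ (le_of_eq (Eq.refl (ρ * (q - p) ^ 2 / (p * (1 - ρ * p)))))]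
end

section
/- Let C_0 be the set of all symmetric k×k matrices with entries in {-1,1}. For permutations π, π' of [k] and B ∈ C_0, let B^{π,π'} be the matrix with entries B^{π,π'}_{ab} = B_{π(a)π'(b)}. Then for all k large enough, there exists a subset C of C_0 with log|C| ≥ k²/32 such that ‖B₁ - B₂^{π,π'}‖_F² ≥ k²/2 for all permutations π, π' and all distinct B₁, B₂ ∈ C. -/
/-!
A symmetric `±1` matrix is a Boolean function on the `N = k(k+1)/2` unordered pairs, and
`‖B₁ - B₂^{π,π'}‖_F²` is four times the number of ordered pairs on which `B₁` and `B₂^{π,π'}`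
disagree. Take a maximal family of patterns any two of which disagree in more than `r = k²/8`
ordered pairs under every `(π, π')`. By maximality the `2^N` patterns are covered by the
`d_Π`-balls of radius `r` around its members, and such a ball is the union of `(k!)²` Hamming
balls of radius `r ≤ N/4`, each of size at most `(4/3)^N 3^r`. Hence
`log |C| ≥ N log(3/2) - r log 3 - 2 log k! ≥ (k²/8) log(27/16) - 2 k log k ≥ k²/32` for large `k`.
-/

open Finset
open scoped Nat

theorem card_hammingBall_bool_le {ι : Type*} [Fintype ι] [DecidableEq ι] (h : ι → Bool) (r : ℕ) :
    #{g : ι → Bool | hammingDist g h ≤ r} ≤ ∑ i ∈ range (r + 1), (Fintype.card ι).choose i := by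
  calc #{g : ι → Bool | hammingDist g h ≤ r}
      ≤ #((range (r + 1)).biUnion fun i => powersetCard i (univ : Finset ι)) := by
        refine card_le_card_of_injOn (fun g => ({e | g e ≠ h e} : Finset ι))
          (fun g hg => ?_) fun g₁ _ g₂ _ heq => ?_
        · simpa [Nat.lt_succ_iff, hammingDist] using (mem_filter.1 hg).2
        · funext e
          have := congrArg (e ∈ ·) heq
          simp only [mem_filter, mem_univ, true_and] at this
          revert this
          cases g₁ e <;> cases g₂ e <;> cases h e <;> decide
    _ ≤ ∑ i ∈ range (r + 1), #(powersetCard i (univ : Finset ι)) := card_biUnion_le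
    _ = _ := by simp [card_powersetCard]

theorem sum_range_choose_le_div_pow {x : ℝ} (hx₀ : 0 < x) (hx₁ : x ≤ 1) {N r : ℕ} (hrN : r ≤ N) :
    ∑ i ∈ range (r + 1), (N.choose i : ℝ) ≤ (x + 1) ^ N / x ^ r := by
  rw [le_div_iff₀ (by positivity), sum_mul]
  calc ∑ i ∈ range (r + 1), (N.choose i : ℝ) * x ^ r
      ≤ ∑ i ∈ range (r + 1), x ^ i * 1 ^ (N - i) * N.choose i := by
        refine sum_le_sum fun i hi => ?_
        rw [one_pow, mul_one, mul_comm]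
        exact mul_le_mul_of_nonneg_right
          (pow_le_pow_of_le_one hx₀.le hx₁ (by simpa [Nat.lt_succ_iff] using hi)) (by positivity)
    _ ≤ ∑ i ∈ range (N + 1), x ^ i * 1 ^ (N - i) * N.choose i :=
        sum_le_sum_of_subset_of_nonneg (range_subset_range.2 (by omega)) fun _ _ _ => by positivity
    _ = (x + 1) ^ N := (add_pow x 1 N).symm

theorem exists_pairwise_not_rel_card_le {α : Type*} [Fintype α] (R : α → α → Prop)
    [DecidableRel R] (hsymm : ∀ x y, R x y → R y x) (hrefl : ∀ x, R x x) {M : ℕ}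
    (hM : ∀ c, #{x | R x c} ≤ M) :
    ∃ C : Finset α, (C : Set α).Pairwise (fun x y => ¬R x y) ∧ Fintype.card α ≤ #C * M := by
  classical
  obtain ⟨C, hC, hmax⟩ := exists_max_image {C : Finset α | (C : Set α).Pairwise fun x y => ¬R x y}
    card ⟨∅, by simp⟩
  rw [mem_filter] at hC
  have hcover : ∀ x, ∃ c ∈ C, R x c := by
    intro x
    by_contra! hfar
    have hx : x ∉ C := fun hx => hfar x hx (hrefl x)
    have hins := hmax (insert x C) <| mem_filter.2 ⟨mem_univ _, by
      simpa using hC.2.insert fun c hc _ => ⟨hfar c hc, fun h => hfar c hc (hsymm _ _ h)⟩⟩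
    rw [card_insert_of_notMem hx] at hins
    omega
  refine ⟨C, hC.2, ?_⟩
  calc Fintype.card α = #(univ : Finset α) := rfl
    _ ≤ #(C.biUnion fun c => {x | R x c}) := card_le_card fun x _ => by
        obtain ⟨c, hc, hxc⟩ := hcover x
        exact mem_biUnion.2 ⟨c, hc, by simpa using hxc⟩
    _ ≤ ∑ c ∈ C, #{x | R x c} := card_biUnion_le
    _ ≤ #C * M := by simpa using sum_le_card_nsmul C _ M fun c _ => hM c

theorem sq_card_le_two_mul_card_sym2 (n : Type*) [Fintype n] :
    Fintype.card n ^ 2 ≤ 2 * Fintype.card (Sym2 n) := by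
  rw [Sym2.card, Nat.choose_two_right, Nat.add_sub_cancel,
    Nat.mul_div_cancel' (by simpa [mul_comm] using (Nat.even_mul_succ_self _).two_dvd)]
  nlinarith

section SymmSignPattern

variable {n : Type*}

def symmSignMatrix (g : Sym2 n → Bool) : Matrix n n ℝ :=
  Matrix.of fun a b => if g s(a, b) then 1 else -1

theorem symmSignMatrix_isSymm (g : Sym2 n → Bool) : (symmSignMatrix g).IsSymm := by
  ext a b
  simp [symmSignMatrix, Sym2.eq_swap]

theorem symmSignMatrix_apply_eq_one_or_eq_neg_one (g : Sym2 n → Bool) (a b : n) :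
    symmSignMatrix g a b = 1 ∨ symmSignMatrix g a b = -1 := by
  simp only [symmSignMatrix, Matrix.of_apply]
  split_ifs <;> simp

theorem symmSignMatrix_injective : Function.Injective (symmSignMatrix (n := n)) := by
  intro g h hgh
  funext e
  induction e using Sym2.ind with
  | h a b =>
    have hab := congrFun (congrFun hgh a) b
    simp only [symmSignMatrix, Matrix.of_apply] at hab
    revert hab
    cases g s(a, b) <;> cases h s(a, b) <;> norm_num

variable [Fintype n]

def permHammingDist (g h : Sym2 n → Bool) (π π' : Equiv.Perm n) : ℕ :=
  hammingDist (fun p : n × n => g s(p.1, p.2)) (fun p => h s(π p.1, π' p.2))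

theorem sum_sq_sub_symmSignMatrix (g h : Sym2 n → Bool) (π π' : Equiv.Perm n) :
    ∑ a, ∑ b, (symmSignMatrix g a b - symmSignMatrix h (π a) (π' b)) ^ 2
      = 4 * permHammingDist g h π π' := by
  rw [← Fintype.sum_prod_type', permHammingDist, hammingDist, card_filter, Nat.cast_sum, mul_sum]
  refine sum_congr rfl fun p _ => ?_
  simp only [symmSignMatrix, Matrix.of_apply]
  cases g s(p.1, p.2) <;> cases h s(π p.1, π' p.2) <;> norm_num

theorem permHammingDist_comm (g h : Sym2 n → Bool) (π π' : Equiv.Perm n) :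
    permHammingDist g h π π' = permHammingDist h g π⁻¹ π'⁻¹ := by
  refine card_equiv (Equiv.prodCongr π π') fun p => ?_
  simp [ne_comm]

/-- Reads `h ∘ (π × π')` on one chosen ordered representative of each unordered pair; this only
forgets coordinates, so the disagreement count can only drop. -/
noncomputable def permCenter (h : Sym2 n → Bool) (π π' : Equiv.Perm n) : Sym2 n → Bool :=
  fun e => h s(π e.out.1, π' e.out.2)

theorem hammingDist_permCenter_le (g h : Sym2 n → Bool) (π π' : Equiv.Perm n) :
    hammingDist g (permCenter h π π') ≤ permHammingDist g h π π' := by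
  refine card_le_card_of_injOn Quot.out (fun e he => ?_)
    (Function.LeftInverse.injective (g := Quot.mk _) Quot.out_eq).injOn
  have hout : s(e.out.1, e.out.2) = e := e.out_eq
  exact mem_filter.2 ⟨mem_univ _, by simpa only [hout, permCenter] using (mem_filter.1 he).2⟩

theorem card_filter_exists_permHammingDist_le [DecidableEq n] (c : Sym2 n → Bool) (r : ℕ) :
    #{g | ∃ π π' : Equiv.Perm n, permHammingDist g c π π' ≤ r}
      ≤ (Fintype.card n)! ^ 2 * ∑ i ∈ range (r + 1), (Fintype.card (Sym2 n)).choose i := by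
  calc #{g | ∃ π π' : Equiv.Perm n, permHammingDist g c π π' ≤ r}
      ≤ #(univ.biUnion fun q : Equiv.Perm n × Equiv.Perm n =>
          {g | hammingDist g (permCenter c q.1 q.2) ≤ r}) := by
        refine card_le_card fun g hg => ?_
        obtain ⟨π, π', hle⟩ := (mem_filter.1 hg).2
        exact mem_biUnion.2 ⟨(π, π'), mem_univ _,
          mem_filter.2 ⟨mem_univ _, (hammingDist_permCenter_le g c π π').trans hle⟩⟩
    _ ≤ ∑ q : Equiv.Perm n × Equiv.Perm n, #{g | hammingDist g (permCenter c q.1 q.2) ≤ r} :=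
        card_biUnion_le
    _ ≤ ∑ _q : Equiv.Perm n × Equiv.Perm n,
          ∑ i ∈ range (r + 1), (Fintype.card (Sym2 n)).choose i :=
        sum_le_sum fun q _ => card_hammingBall_bool_le _ r
    _ = _ := by simp [Fintype.card_perm, sq]

theorem exists_symm_sign_patterns_separated [DecidableEq n] {r : ℕ}
    (hr : 4 * r ≤ Fintype.card (Sym2 n)) :
    ∃ C : Finset (Sym2 n → Bool),
      (C : Set (Sym2 n → Bool)).Pairwise (fun g h => ∀ π π', r < permHammingDist g h π π') ∧
      (2 : ℝ) ^ Fintype.card (Sym2 n) ≤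
        #C * ((Fintype.card n)! ^ 2 * ((4 / 3) ^ Fintype.card (Sym2 n) * 3 ^ r)) := by
  set N := Fintype.card (Sym2 n)
  obtain ⟨C, hsep, hcard⟩ := exists_pairwise_not_rel_card_le
    (fun g h => ∃ π π' : Equiv.Perm n, permHammingDist g h π π' ≤ r)
    (fun g h ⟨π, π', hle⟩ => ⟨π⁻¹, π'⁻¹, permHammingDist_comm g h π π' ▸ hle⟩)
    (fun g => ⟨1, 1, by simp [permHammingDist]⟩)
    (card_filter_exists_permHammingDist_le · r)
  refine ⟨C, fun g hg h hh hne π π' => ?_, ?_⟩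
  · by_contra! hle
    exact hsep hg hh hne ⟨π, π', hle⟩
  have hball : ∑ i ∈ range (r + 1), (N.choose i : ℝ) ≤ (4 / 3) ^ N * 3 ^ r := by
    convert sum_range_choose_le_div_pow (x := 1 / 3) (by norm_num) (by norm_num)
      (by omega : r ≤ N) using 1
    rw [one_div, inv_pow, div_inv_eq_mul]
    norm_num
  calc (2 : ℝ) ^ N = (Fintype.card (Sym2 n → Bool) : ℕ) := by simp [N]
    _ ≤ #C * ((Fintype.card n)! ^ 2 * ∑ i ∈ range (r + 1), (N.choose i : ℝ)) := by
        exact_mod_cast hcard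
    _ ≤ _ := by gcongr

end SymmSignPattern

theorem log_factorial_le_mul_log (k : ℕ) : Real.log (k ! : ℝ) ≤ k * Real.log k := by
  rw [← Real.log_pow]
  exact Real.log_le_log (by positivity) (by exact_mod_cast Nat.factorial_le_pow k)

theorem sq_div_32_le_log_of_two_pow_le {m N r k : ℕ} (hN : k ^ 2 ≤ 2 * N) (hr : 8 * r ≤ k ^ 2)
    (hk : Real.log k ≤ k / 128)
    (h : (2 : ℝ) ^ N ≤ m * (k ! ^ 2 * ((4 / 3) ^ N * 3 ^ r))) :
    (k : ℝ) ^ 2 / 32 ≤ Real.log m := by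
  have hm : (0 : ℝ) < m := by
    rcases (Nat.cast_nonneg m : (0 : ℝ) ≤ m).eq_or_lt with hm | hm
    · rw [← hm, zero_mul] at h
      exact absurd h (not_le.2 (by positivity))
    · exact hm
  have hlog := Real.log_le_log (by positivity) h
  rw [Real.log_mul hm.ne' (by positivity), Real.log_mul (by positivity) (by positivity),
    Real.log_mul (by positivity) (by positivity), Real.log_pow, Real.log_pow, Real.log_pow,
    Real.log_pow, Real.log_div (by norm_num) (by norm_num), show (4 : ℝ) = 2 ^ 2 by norm_num,
    Real.log_pow] at hlog
  push_cast at hlog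
  have hN' : (k : ℝ) ^ 2 ≤ 2 * N := by exact_mod_cast hN
  have hr' : 8 * (r : ℝ) ≤ k ^ 2 := by exact_mod_cast hr
  have hlog32 : 0 ≤ Real.log 3 - Real.log 2 :=
    sub_nonneg.2 (Real.log_le_log (by norm_num) (by norm_num))
  have hkk := mul_le_mul_of_nonneg_left hk (Nat.cast_nonneg k)
  have h27 : (11 / 27 : ℝ) ≤ 3 * Real.log 3 - 4 * Real.log 2 := by
    have h := Real.one_sub_inv_le_log_of_pos (x := 27 / 16) (by norm_num)
    rw [Real.log_div (by norm_num) (by norm_num), show (27 : ℝ) = 3 ^ 3 by norm_num,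
      show (16 : ℝ) = 2 ^ 4 by norm_num, Real.log_pow, Real.log_pow] at h
    push_cast at h
    linarith
  calc (k : ℝ) ^ 2 / 32 ≤ k ^ 2 / 8 * (3 * Real.log 3 - 4 * Real.log 2) - k ^ 2 / 64 := by
        nlinarith
    _ ≤ N * (Real.log 3 - Real.log 2) - r * Real.log 3 - 2 * (k * Real.log k) := by
        nlinarith [mul_le_mul_of_nonneg_right hN' hlog32,
          mul_le_mul_of_nonneg_right hr' (Real.log_nonneg (by norm_num : (1 : ℝ) ≤ 3))]
    _ ≤ Real.log m := by linarith [log_factorial_le_mul_log k]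

/-- Packing of symmetric ±1 matrices separated in Frobenius norm under all
simultaneous row/column permutations. -/
theorem stmt_7 :
    ∃ k₀ : ℕ, ∀ k : ℕ, k₀ ≤ k →
      ∃ C : Finset (Matrix (Fin k) (Fin k) ℝ),
        (∀ B ∈ C, B.IsSymm ∧ ∀ a b, B a b = 1 ∨ B a b = -1) ∧
        (k : ℝ) ^ 2 / 32 ≤ Real.log (C.card : ℝ) ∧
        ∀ B₁ ∈ C, ∀ B₂ ∈ C, B₁ ≠ B₂ → ∀ π π' : Equiv.Perm (Fin k),
          (k : ℝ) ^ 2 / 2 ≤ ∑ a, ∑ b, (B₁ a b - B₂ (π a) (π' b)) ^ 2 := by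
  have hlog : ∀ᶠ k : ℕ in Filter.atTop, Real.log k ≤ k / 128 := by
    filter_upwards [tendsto_natCast_atTop_atTop.eventually
      (Real.isLittleO_log_id_atTop.bound (by norm_num : (0 : ℝ) < 1 / 128))] with k hk
    simpa [div_eq_inv_mul] using (le_abs_self _).trans hk
  obtain ⟨k₀, hk₀⟩ := Filter.eventually_atTop.1 hlog
  refine ⟨k₀, fun k hk => ?_⟩
  have hN : k ^ 2 ≤ 2 * Fintype.card (Sym2 (Fin k)) := by
    simpa using sq_card_le_two_mul_card_sym2 (Fin k)
  obtain ⟨C, hsep, hcount⟩ := exists_symm_sign_patterns_separated (n := Fin k) (r := k ^ 2 / 8)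
    (by omega)
  refine ⟨C.image symmSignMatrix, ?_, ?_, ?_⟩
  · simp only [mem_image]
    rintro _ ⟨g, -, rfl⟩
    exact ⟨symmSignMatrix_isSymm g, symmSignMatrix_apply_eq_one_or_eq_neg_one g⟩
  · rw [card_image_of_injective C symmSignMatrix_injective]
    exact sq_div_32_le_log_of_two_pow_le hN (Nat.mul_div_le _ 8) (hk₀ k hk) (by simpa using hcount)
  · simp only [mem_image]
    rintro _ ⟨g₁, hg₁, rfl⟩ _ ⟨g₂, hg₂, rfl⟩ hne π π'
    have hfar := (Nat.div_lt_iff_lt_mul (by norm_num)).1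
      (hsep hg₁ hg₂ (by rintro rfl; exact hne rfl) π π')
    rw [sum_sq_sub_symmSignMatrix]
    have : (k : ℝ) ^ 2 ≤ permHammingDist g₁ g₂ π π' * 8 := by exact_mod_cast hfar.le
    linarith
end

section
/- Fix η₀ = 1/16 and assume k is a multiple of 16 and large enough. There exists a symmetric k×k matrix B with entries in {-1,1} such that: (i) for every a ≠ b in [k], the inner product of rows satisfies |⟨B_{a,·}, B_{b,·}⟩| ≤ k/4; and (ii) for any disjoint subsets X, Y of [k] with |X| = |Y| = η₀k and any bijections π₁ : [η₀k] → X, π₂ : [η₀k] → Y, one has Σ_{a,b=1}^{η₀k} (B_{π₁(a),π₁(b)} - B_{π₂(a),π₂(b)})² ≥ η₀²k²/2. -/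
/-!
Take `B a b = g s(a, b)` for a uniformly random sign pattern `g : Sym2 (Fin k) → ℤˣ` and count
the bad patterns. Every bad event says that a sum `∑ j, g (u j) * g (v j)` is large, where `v` is
injective and misses the range of `u`. Then `g ↦ (j ↦ g (u j) * g (v j))` is a surjective
homomorphism onto the sign vectors, so these products are independent uniform signs and the
Chernoff bound with `cosh x ≤ exp (x² / 2)` applies. For two rows `a ≠ b` the pairs are
`(s(a, c), s(b, c))` with `c ≠ a`. For two disjoint blocks they are `(z.map π₁, z.map π₂)` with
`z : Sym2 (Fin (k / 16))`, because `(x - y)² = 2 - 2 x y` for signs and every unordered pair occurs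
in the double sum. At most `k²` row events of probability `exp (-Ω(k))` and `k ^ (k / 8)` block
events of probability `exp (-Ω(k²))` cannot cover all patterns once `k` is large.
-/

open Finset Real Filter Function

section

variable {G H M : Type*} [Group G] [Group H] [Fintype G] [Fintype H] [AddCommMonoid M]

lemma MonoidHom.card_smul_sum_comp_of_surjective (φ : G →* H) (hφ : Surjective φ)
    (F : H → M) : Fintype.card H • ∑ g, F (φ g) = Fintype.card G • ∑ h, F h := by
  have shift (h : H) : ∑ g, F (φ g) = ∑ g, F (φ g * h) := by
    obtain ⟨g₀, rfl⟩ := hφ h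
    simpa using (Equiv.sum_comp (Equiv.mulRight g₀) fun g => F (φ g)).symm
  calc Fintype.card H • ∑ g, F (φ g) = ∑ h, ∑ g, F (φ g * h) := by
        simp [← shift]
    _ = ∑ g, ∑ h, F (φ g * h) := sum_comm
    _ = ∑ _g : G, ∑ h, F h := sum_congr rfl fun g _ => Equiv.sum_comp (Equiv.mulLeft (φ g)) F
    _ = Fintype.card G • ∑ h, F h := by rw [sum_const, card_univ]

lemma MonoidHom.card_mul_card_filter_comp_of_surjective (φ : G →* H) (hφ : Surjective φ)
    (P : H → Prop) [DecidablePred P] :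
    Fintype.card H * #{g | P (φ g)} = Fintype.card G * #{h | P h} := by
  have := φ.card_smul_sum_comp_of_surjective hφ fun h => if P h then 1 else 0
  simpa only [smul_eq_mul, sum_boole, Nat.cast_id] using this

end

lemma abs_coe_units_int (u : ℤˣ) : |(u : ℝ)| = 1 := by
  rcases Int.units_eq_one_or u with rfl | rfl <;> simp

lemma coe_units_int_sub_sq (u w : ℤˣ) : ((u : ℝ) - w) ^ 2 = 2 - 2 * (u * w : ℤˣ) := by
  rcases Int.units_eq_one_or u with rfl | rfl <;> rcases Int.units_eq_one_or w with rfl | rfl <;>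
    norm_num

lemma exists_forall_not_of_sum_card_filter_lt {Ω ι : Type*} [Fintype Ω] [Fintype ι]
    (P : ι → Ω → Prop) [∀ i, DecidablePred (P i)]
    (h : ∑ i, #{ω | P i ω} < Fintype.card Ω) : ∃ ω, ∀ i, ¬ P i ω := by
  classical
  by_contra! hP
  refine h.not_ge ((card_le_card fun ω _ => ?_).trans card_biUnion_le)
  obtain ⟨i, hi⟩ := hP ω
  exact mem_biUnion.2 ⟨i, mem_univ _, mem_filter.2 ⟨mem_univ _, hi⟩⟩

section Rademacher

variable {J : Type*} [Fintype J] [DecidableEq J]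

lemma sum_exp_mul_sum_units (c : ℝ) :
    ∑ x : J → ℤˣ, exp (c * ∑ j, (x j : ℝ)) = (2 * cosh c) ^ Fintype.card J := by
  simp_rw [mul_sum, exp_sum]
  rw [← Fintype.prod_sum fun (_ : J) (s : ℤˣ) => exp (c * s), prod_const, card_univ,
    UnitsInt.univ, sum_pair (by decide), cosh_eq]
  norm_num
  ring_nf

lemma card_le_sum_units_le {t s : ℝ} (ht : 0 ≤ t) (hs : 0 < s) (hJ : (Fintype.card J : ℝ) ≤ s) :
    (#{x : J → ℤˣ | t ≤ ∑ j, (x j : ℝ)} : ℝ) ≤ 2 ^ Fintype.card J * exp (-t ^ 2 / (2 * s)) := by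
  set c := t / s
  have hc : 0 ≤ c := div_nonneg ht hs.le
  have markov : (#{x : J → ℤˣ | t ≤ ∑ j, (x j : ℝ)} : ℝ) * exp (c * t) ≤
      ∑ x : J → ℤˣ, exp (c * ∑ j, (x j : ℝ)) := by
    rw [← nsmul_eq_mul, ← sum_const]
    refine (sum_le_sum fun x hx => ?_).trans
      (sum_le_sum_of_subset_of_nonneg (filter_subset _ _) fun _ _ _ => (exp_pos _).le)
    exact exp_le_exp.2 (mul_le_mul_of_nonneg_left (mem_filter.1 hx).2 hc)
  have mgf : (2 * cosh c) ^ Fintype.card J ≤ 2 ^ Fintype.card J * exp (s * c ^ 2 / 2) := by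
    calc (2 * cosh c) ^ Fintype.card J ≤ (2 * exp (c ^ 2 / 2)) ^ Fintype.card J := by
          gcongr; exact cosh_le_exp_half_sq c
      _ = 2 ^ Fintype.card J * exp (Fintype.card J * c ^ 2 / 2) := by
          rw [mul_pow, ← exp_nat_mul]; ring_nf
      _ ≤ 2 ^ Fintype.card J * exp (s * c ^ 2 / 2) := by gcongr
  have exponent : -t ^ 2 / (2 * s) = s * c ^ 2 / 2 - c * t := by
    simp only [c]; field_simp; ring
  rw [sum_exp_mul_sum_units] at markov
  rw [exponent, exp_sub, mul_div_assoc', le_div_iff₀ (exp_pos _)]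
  exact markov.trans mgf

lemma card_le_abs_sum_units_le {t s : ℝ} (ht : 0 ≤ t) (hs : 0 < s)
    (hJ : (Fintype.card J : ℝ) ≤ s) :
    (#{x : J → ℤˣ | t ≤ |∑ j, (x j : ℝ)|} : ℝ) ≤
      2 ^ Fintype.card J * (2 * exp (-t ^ 2 / (2 * s))) := by
  have hneg : #{x : J → ℤˣ | t ≤ -∑ j, (x j : ℝ)} = #{x : J → ℤˣ | t ≤ ∑ j, (x j : ℝ)} :=
    card_nbij' (- ·) (- ·) (by intro x; simp) (by intro x; simp) (fun x _ => neg_neg x)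
      (fun x _ => neg_neg x)
  have split : #{x : J → ℤˣ | t ≤ |∑ j, (x j : ℝ)|} ≤
      #{x : J → ℤˣ | t ≤ ∑ j, (x j : ℝ)} + #{x : J → ℤˣ | t ≤ -∑ j, (x j : ℝ)} := by
    simp_rw [le_abs, filter_or]
    exact card_union_le _ _
  rw [hneg] at split
  have := card_le_sum_units_le ht hs hJ
  calc (#{x : J → ℤˣ | t ≤ |∑ j, (x j : ℝ)|} : ℝ)
      ≤ 2 * #{x : J → ℤˣ | t ≤ ∑ j, (x j : ℝ)} := by rw [two_mul]; exact_mod_cast split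
    _ ≤ _ := by linarith

end Rademacher

section PairMul

variable {ι J M : Type*}

def pairMul [CommMonoid M] (u v : J → ι) : (ι → M) →* (J → M) where
  toFun g j := g (u j) * g (v j)
  map_one' := by ext; simp
  map_mul' g h := by ext; simp [mul_mul_mul_comm]

@[simp]
lemma pairMul_apply [CommMonoid M] (u v : J → ι) (g : ι → M) (j : J) :
    pairMul u v g j = g (u j) * g (v j) := rfl

lemma pairMul_surjective [CommMonoid M] {u v : J → ι} (hv : Injective v)
    (huv : ∀ i j, u i ≠ v j) : Surjective (pairMul (M := M) u v) := fun x =>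
  ⟨extend v x 1, funext fun j => by
    simp [hv.extend_apply, extend_apply' _ _ _ fun ⟨i, h⟩ => huv j i h.symm]⟩

variable [Fintype ι] [DecidableEq ι] [Fintype J] [DecidableEq J]

lemma card_filter_pairMul_le {u v : J → ι} (hv : Injective v) (huv : ∀ i j, u i ≠ v j)
    {P : (J → ℤˣ) → Prop} [DecidablePred P] {e : ℝ}
    (hP : (#{x | P x} : ℝ) ≤ 2 ^ Fintype.card J * e) :
    (#{g : ι → ℤˣ | P (pairMul u v g)} : ℝ) ≤ 2 ^ Fintype.card ι * e := by
  have h := (pairMul u v).card_mul_card_filter_comp_of_surjective (pairMul_surjective hv huv) P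
  simp only [Fintype.card_fun, Fintype.card_units_int] at h
  have h' : (2 : ℝ) ^ Fintype.card J * #{g : ι → ℤˣ | P (pairMul u v g)} =
      2 ^ Fintype.card ι * #{x | P x} := by exact_mod_cast h
  refine le_of_mul_le_mul_left ?_ (by positivity : (0 : ℝ) < 2 ^ Fintype.card J)
  rw [h']
  calc (2 : ℝ) ^ Fintype.card ι * #{x | P x} ≤ 2 ^ Fintype.card ι * (2 ^ Fintype.card J * e) := by
        gcongr
    _ = 2 ^ Fintype.card J * (2 ^ Fintype.card ι * e) := by ring

end PairMul

section Sym2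

variable {κ : Type*} [Fintype κ]

lemma sum_sym2_le_sum_sum {M : Type*} [AddCommMonoid M] [Preorder M] [AddLeftMono M]
    (h : Sym2 κ → M) (hh : ∀ z, 0 ≤ h z) : ∑ z, h z ≤ ∑ a, ∑ b, h s(a, b) := by
  classical
  calc ∑ z, h z = ∑ z ∈ univ.image (uncurry Sym2.mk), h z := by
        rw [image_univ_of_surjective Sym2.mk_surjective]
    _ ≤ ∑ p : κ × κ, h (uncurry Sym2.mk p) := sum_image_le_of_nonneg fun z _ => hh z
    _ = ∑ a, ∑ b, h s(a, b) := Fintype.sum_prod_type _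

variable (κ) in
lemma two_mul_card_sym2 :
    (2 * Fintype.card (Sym2 κ) : ℝ) = Fintype.card κ * (Fintype.card κ + 1) := by
  rw [Sym2.card, Nat.cast_choose_two]
  push_cast
  ring

end Sym2

section SignMatrix

variable {n : Type*}

def signMatrix (g : Sym2 n → ℤˣ) : Matrix n n ℝ := Matrix.of fun a b => (g s(a, b) : ℝ)

lemma signMatrix_isSymm (g : Sym2 n → ℤˣ) : (signMatrix g).IsSymm :=
  Matrix.IsSymm.ext fun a b => by simp [signMatrix, Sym2.eq_swap]

lemma signMatrix_eq_one_or (g : Sym2 n → ℤˣ) (a b : n) :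
    signMatrix g a b = 1 ∨ signMatrix g a b = -1 := by
  rcases Int.units_eq_one_or (g s(a, b)) with h | h <;> simp [signMatrix, h]

variable [Fintype n] [DecidableEq n]

lemma card_lt_abs_sum_signMatrix_mul_le {a b : n} (hab : a ≠ b) {t : ℝ} (ht : 0 ≤ t) :
    (#{g : Sym2 n → ℤˣ | t + 1 < |∑ c, signMatrix g a c * signMatrix g b c|} : ℝ) ≤
      2 ^ Fintype.card (Sym2 n) * (2 * exp (-t ^ 2 / (2 * Fintype.card n))) := by
  let u : {c // c ≠ a} → Sym2 n := fun c => s(a, c)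
  let v : {c // c ≠ a} → Sym2 n := fun c => s(b, c)
  have hv : Injective v := fun c c' h => Subtype.ext (Sym2.congr_right.1 h)
  have huv (c c' : {c // c ≠ a}) : u c ≠ v c' := by
    change s(a, c.1) ≠ s(b, c'.1)
    rw [Ne, Sym2.eq_iff]
    rintro (⟨h, -⟩ | ⟨h, -⟩)
    exacts [hab h, c'.2 h.symm]
  have hcard : (Fintype.card {c // c ≠ a} : ℝ) ≤ Fintype.card n := by
    exact_mod_cast Fintype.card_subtype_le _
  refine le_trans ?_ (card_filter_pairMul_le hv huv (card_le_abs_sum_units_le ht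
    (by exact_mod_cast Fintype.card_pos_iff.2 ⟨a⟩) hcard))
  gcongr with g
  intro hg
  -- the term `c = a` reuses the entry `s(a, b)` of the term `c = b`; splitting it off costs `1`
  rw [Fintype.sum_eq_add_sum_subtype_ne _ a] at hg
  have := (abs_add_le _ _).trans_lt' hg
  simp only [signMatrix, Matrix.of_apply, abs_mul, abs_coe_units_int] at this
  simp only [u, v, pairMul_apply, Units.val_mul, Int.cast_mul]
  linarith

lemma card_sum_sq_sub_signMatrix_lt_le {κ : Type*} [Fintype κ] [DecidableEq κ] [Nonempty κ]
    {π₁ π₂ : κ → n} (h₂ : Injective π₂) (h₁₂ : ∀ i j, π₁ i ≠ π₂ j) :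
    (#{g : Sym2 n → ℤˣ | ∑ a, ∑ b, (signMatrix g (π₁ a) (π₁ b) - signMatrix g (π₂ a) (π₂ b)) ^ 2
        < (Fintype.card κ : ℝ) ^ 2 / 2} : ℝ) ≤
      2 ^ Fintype.card (Sym2 n) * exp (-(Fintype.card κ : ℝ) ^ 2 / 32) := by
  have hm : (1 : ℝ) ≤ Fintype.card κ := Nat.one_le_cast.2 Fintype.card_pos
  have hcard := two_mul_card_sym2 κ
  set m : ℝ := (Fintype.card κ : ℝ)
  have huv (z w : Sym2 κ) : z.map π₁ ≠ w.map π₂ := by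
    induction z using Sym2.ind
    induction w using Sym2.ind
    simp [h₁₂]
  have hexp : -(m ^ 2 / 4) ^ 2 / (2 * m ^ 2) = -m ^ 2 / 32 := by field_simp; ring
  refine le_trans ?_ (hexp ▸ card_filter_pairMul_le (Sym2.map.injective h₂) huv
    (card_le_sum_units_le (by positivity) (by positivity) (by nlinarith)))
  gcongr with g
  intro hg
  have := (sum_sym2_le_sum_sum (fun z => ((g (z.map π₁) : ℝ) - g (z.map π₂)) ^ 2)
    fun _ => sq_nonneg _).trans_lt hg
  simp only [coe_units_int_sub_sq, sum_sub_distrib, ← mul_sum, sum_const, card_univ,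
    nsmul_eq_mul] at this
  simp only [pairMul_apply]
  nlinarith

lemma exists_signMatrix {κ : Type*} [Fintype κ] [DecidableEq κ] [Nonempty κ] {t : ℝ}
    (ht : 0 ≤ t)
    (hsmall : (Fintype.card n : ℝ) ^ 2 * (2 * exp (-t ^ 2 / (2 * Fintype.card n))) +
      (Fintype.card n : ℝ) ^ (2 * Fintype.card κ) * exp (-(Fintype.card κ : ℝ) ^ 2 / 32) < 1) :
    ∃ g : Sym2 n → ℤˣ,
      (∀ a b, a ≠ b → |∑ c, signMatrix g a c * signMatrix g b c| ≤ t + 1) ∧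
      ∀ π₁ π₂ : κ → n, Injective π₂ → (∀ i j, π₁ i ≠ π₂ j) →
        (Fintype.card κ : ℝ) ^ 2 / 2 ≤
          ∑ a, ∑ b, (signMatrix g (π₁ a) (π₁ b) - signMatrix g (π₂ a) (π₂ b)) ^ 2 := by
  classical
  let Bad : {p : n × n // p.1 ≠ p.2} ⊕
      {q : (κ → n) × (κ → n) // Injective q.2 ∧ ∀ i j, q.1 i ≠ q.2 j} →
      (Sym2 n → ℤˣ) → Prop :=
    Sum.elim (fun p g => t + 1 < |∑ c, signMatrix g p.1.1 c * signMatrix g p.1.2 c|)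
      fun q g => ∑ a, ∑ b, (signMatrix g (q.1.1 a) (q.1.1 b) -
        signMatrix g (q.1.2 a) (q.1.2 b)) ^ 2 < (Fintype.card κ : ℝ) ^ 2 / 2
  suffices hsum : ∑ i, #{g | Bad i g} < Fintype.card (Sym2 n → ℤˣ) by
    obtain ⟨g, hg⟩ := exists_forall_not_of_sum_card_filter_lt Bad hsum
    exact ⟨g, fun a b hab => not_lt.1 (hg (.inl ⟨(a, b), hab⟩)),
      fun π₁ π₂ h₂ h₁₂ => not_lt.1 (hg (.inr ⟨(π₁, π₂), h₂, h₁₂⟩))⟩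
  have hpairs : (Fintype.card {p : n × n // p.1 ≠ p.2} : ℝ) ≤ Fintype.card n ^ 2 := by
    exact_mod_cast (Fintype.card_subtype_le _).trans_eq (by rw [Fintype.card_prod, sq])
  have hembeddings : (Fintype.card
      {q : (κ → n) × (κ → n) // Injective q.2 ∧ ∀ i j, q.1 i ≠ q.2 j} : ℝ) ≤
      Fintype.card n ^ (2 * Fintype.card κ) := by
    exact_mod_cast (Fintype.card_subtype_le _).trans_eq
      (by rw [Fintype.card_prod, Fintype.card_fun, ← pow_add, two_mul])
  suffices (∑ i, #{g | Bad i g} : ℝ) < 2 ^ Fintype.card (Sym2 n) by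
    rw [Fintype.card_fun, Fintype.card_units_int]
    exact_mod_cast this
  rw [Fintype.sum_sum_type]
  refine (add_le_add
    (sum_le_card_nsmul _ _ _ fun p _ => card_lt_abs_sum_signMatrix_mul_le p.2 ht)
    (sum_le_card_nsmul _ _ _ fun q _ => card_sum_sq_sub_signMatrix_lt_le q.2.1 q.2.2)).trans_lt ?_
  simp only [card_univ, nsmul_eq_mul]
  calc _ ≤ (Fintype.card n : ℝ) ^ 2 *
          (2 ^ Fintype.card (Sym2 n) * (2 * exp (-t ^ 2 / (2 * Fintype.card n)))) +
        (Fintype.card n : ℝ) ^ (2 * Fintype.card κ) *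
          (2 ^ Fintype.card (Sym2 n) * exp (-(Fintype.card κ : ℝ) ^ 2 / 32)) := by
        gcongr
    _ < 2 ^ Fintype.card (Sym2 n) :=
        lt_of_eq_of_lt (by ring) (mul_lt_of_lt_one_right (by positivity) hsmall)

end SignMatrix

-- The hypothesis of `exists_signMatrix` for `k = 16 m` and `t = 2 m`.
lemma eventually_union_bound_lt_one :
    ∀ᶠ m : ℕ in atTop, (16 * m : ℝ) ^ 2 * (2 * exp (-(m : ℝ) / 8)) +
      (16 * m : ℝ) ^ (2 * m) * exp (-(m : ℝ) ^ 2 / 32) < 1 := by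
  have hlim := (tendsto_exp_div_pow_atTop 2).comp
    (tendsto_natCast_atTop_atTop.atTop_div_const (by norm_num : (0 : ℝ) < 32))
  filter_upwards [hlim.eventually_gt_atTop (2 ^ 19), eventually_ge_atTop 1] with m hE hm
  simp only [comp_apply] at hE
  have hm' : (1 : ℝ) ≤ m := by exact_mod_cast hm
  set E := exp ((m : ℝ) / 32)
  have hE' : 512 * (m : ℝ) ^ 2 < E := by
    rw [lt_div_iff₀ (by positivity)] at hE
    linarith
  have hE2 : 2 ≤ E := by nlinarith
  have exp_eq (c : ℝ) (k : ℕ) (hc : c = k * (m / 32)) : exp (-c) = (E ^ k)⁻¹ := by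
    rw [hc, exp_neg, exp_nat_mul]
  have rows : (16 * m : ℝ) ^ 2 * (2 * exp (-(m : ℝ) / 8)) < 1 / 2 := by
    rw [neg_div, exp_eq _ 4 (by ring), show (16 * m : ℝ) ^ 2 * (2 * (E ^ 4)⁻¹) =
      512 * m ^ 2 / E ^ 4 by ring, div_lt_iff₀ (by positivity)]
    nlinarith [pow_le_pow_right₀ (by linarith : 1 ≤ E) (by norm_num : 2 ≤ 4)]
  have blocks : (16 * m : ℝ) ^ (2 * m) * exp (-(m : ℝ) ^ 2 / 32) ≤ 1 / 2 := by
    rw [neg_div, exp_eq _ m (by ring), pow_mul, ← inv_pow, ← mul_pow]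
    calc ((16 * m : ℝ) ^ 2 * E⁻¹) ^ m ≤ (1 / 2) ^ m := by
          gcongr
          rw [← div_eq_mul_inv, div_le_iff₀ (by positivity)]
          linarith
      _ ≤ 1 / 2 := pow_le_of_le_one (by norm_num) (by norm_num) (by omega)
  linarith

/-- Existence of a symmetric ±1 matrix with nearly orthogonal rows and well-separated
principal submatrices indexed by disjoint subsets of size k/16 (η₀ = 1/16,
so η₀²k²/2 = k²/512). -/
theorem stmt_8 :
    ∃ k₀ : ℕ, ∀ k : ℕ, k₀ ≤ k → 16 ∣ k →
      ∃ B : Matrix (Fin k) (Fin k) ℝ,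
        B.IsSymm ∧ (∀ a b, B a b = 1 ∨ B a b = -1) ∧
        (∀ a b : Fin k, a ≠ b → |∑ c, B a c * B b c| ≤ (k : ℝ) / 4) ∧
        ∀ X Y : Finset (Fin k), X.card = k / 16 → Y.card = k / 16 → Disjoint X Y →
          ∀ π₁ π₂ : Fin (k / 16) → Fin k,
            Function.Injective π₁ → (∀ i, π₁ i ∈ X) →
            Function.Injective π₂ → (∀ i, π₂ i ∈ Y) →
            (k : ℝ) ^ 2 / 512 ≤ ∑ a, ∑ b, (B (π₁ a) (π₁ b) - B (π₂ a) (π₂ b)) ^ 2 := by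
  obtain ⟨M, hM⟩ := eventually_atTop.1 eventually_union_bound_lt_one
  refine ⟨16 * (M + 1), fun k hk ⟨m, hkm⟩ => ?_⟩
  subst hkm
  rw [Nat.mul_div_cancel_left m (by norm_num)]
  have hm : (1 : ℝ) ≤ m := by exact_mod_cast (by omega : 1 ≤ m)
  have : Nonempty (Fin m) := ⟨⟨0, by omega⟩⟩
  have hexp : -(2 * m : ℝ) ^ 2 / (2 * (16 * m)) = -m / 8 := by field_simp; ring
  obtain ⟨g, hrows, hblocks⟩ := exists_signMatrix (n := Fin (16 * m)) (κ := Fin m)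
    (t := 2 * m) (by positivity) (by simpa [hexp] using hM m (by omega))
  refine ⟨signMatrix g, signMatrix_isSymm g, signMatrix_eq_one_or g, fun a b hab => ?_,
    fun X Y _ _ hXY π₁ π₂ _ hπ₁X hπ₂ hπ₂Y => ?_⟩
  · calc _ ≤ 2 * (m : ℝ) + 1 := hrows a b hab
      _ ≤ _ := by push_cast; linarith
  · calc ((16 * m : ℕ) : ℝ) ^ 2 / 512 = (m : ℝ) ^ 2 / 2 := by push_cast; ring
      _ ≤ _ := by
        simpa using hblocks π₁ π₂ hπ₂ fun i j h => disjoint_left.1 hXY (hπ₁X i) (h ▸ hπ₂Y j)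
end

section
/- Let B₁, B₂ be symmetric k×k matrices with entries in {-1,1} such that ‖B₁ - B₂^{π₁,π₂}‖_F² ≥ k²/2 for all permutations π₁, π₂ of [k] (where B^{π,π'}_{ab} = B_{π(a)π'(b)}). Let ω be a k×k matrix with nonnegative entries whose every row and column sums to 1/k. Then (ε²/4)·Σ_{a₁,a₂,b₁,b₂ ∈ [k]} ω_{a₁a₂} ω_{b₁b₂} ((B₁)_{a₁b₁} - (B₂)_{a₂b₂})² ≥ ε²/8 for any ε > 0. -/
private lemma pull_sum {ι κ : Type*} [Fintype ι] [Fintype κ] (c : κ → ℝ) (f : ι → κ → ℝ) :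
    (∑ i, ∑ j, c j * f i j) = ∑ j, c j * ∑ i, f i j := by
  rw [Finset.sum_comm]
  simp [Finset.mul_sum]

set_option maxHeartbeats 1000000 in
/-- Separation of step graphons: if two symmetric ±1 matrices are k²/2-separated in
Frobenius norm under every pair of permutations, then the ω-weighted quadratic form
is bounded below by ε²/8. -/
theorem stmt_10 (k : ℕ) (hk : 0 < k) (B₁ B₂ : Matrix (Fin k) (Fin k) ℝ)
    (h₁ : B₁.IsSymm) (h₂ : B₂.IsSymm)
    (he₁ : ∀ a b, B₁ a b = 1 ∨ B₁ a b = -1) (he₂ : ∀ a b, B₂ a b = 1 ∨ B₂ a b = -1)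
    (hsep : ∀ π₁ π₂ : Equiv.Perm (Fin k),
      (k : ℝ) ^ 2 / 2 ≤ ∑ a, ∑ b, (B₁ a b - B₂ (π₁ a) (π₂ b)) ^ 2)
    (ω : Matrix (Fin k) (Fin k) ℝ) (hnn : ∀ a b, 0 ≤ ω a b)
    (hrow : ∀ a, ∑ b, ω a b = 1 / k) (hcol : ∀ b, ∑ a, ω a b = 1 / k)
    (ε : ℝ) (hε : 0 < ε) :
    ε ^ 2 / 8 ≤ ε ^ 2 / 4 * ∑ a₁, ∑ a₂, ∑ b₁, ∑ b₂,
      ω a₁ a₂ * ω b₁ b₂ * (B₁ a₁ b₁ - B₂ a₂ b₂) ^ 2 := by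
  have hk' : (k : ℝ) ≠ 0 := Nat.cast_ne_zero.2 hk.ne'
  -- the matrix k • ω is doubly stochastic
  set M : Matrix (Fin k) (Fin k) ℝ := fun a b => (k : ℝ) * ω a b with hM
  have hMds : M ∈ doublyStochastic ℝ (Fin k) := by
    rw [mem_doublyStochastic_iff_sum]
    refine ⟨fun i j => mul_nonneg (Nat.cast_nonneg k) (hnn i j), fun i => ?_, fun j => ?_⟩
    · rw [← Finset.mul_sum, hrow]; field_simp
    · rw [← Finset.mul_sum, hcol]; field_simp
  obtain ⟨w, hw0, hw1, hw3⟩ := exists_eq_sum_perm_of_mem_doublyStochastic hMds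
  have hω : ∀ a b, ω a b = (1 / k) * ∑ π : Equiv.Perm (Fin k),
      w π * (if π a = b then 1 else 0) := by
    intro a b
    have := congrFun (congrFun hw3 a) b
    simp only [Matrix.sum_apply, Matrix.smul_apply, Equiv.Perm.permMatrix,
      PEquiv.toMatrix_apply, Equiv.toPEquiv_apply, Option.mem_def, Option.some.injEq,
      smul_eq_mul, hM] at this
    rw [this]
    field_simp
  -- key substitution lemma
  have hsub : ∀ (c : Fin k) (g : Fin k → ℝ),
      ∑ d, ω c d * g d = (1 / k) * ∑ π : Equiv.Perm (Fin k), w π * g (π c) := by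
    intro c g
    simp_rw [hω, mul_assoc, Finset.sum_mul, ← Finset.mul_sum]
    congr 1
    rw [Finset.sum_comm]
    refine Finset.sum_congr rfl fun π _ => ?_
    have hx : ∀ x, (w π * if π c = x then 1 else 0) * g x
        = if π c = x then w π * g x else 0 := fun x => by split <;> simp
    simp_rw [hx, Finset.sum_ite_eq, Finset.mem_univ, if_true]
  have key : ∀ a₁ b₁, (∑ a₂, ∑ b₂, ω a₁ a₂ * ω b₁ b₂ * (B₁ a₁ b₁ - B₂ a₂ b₂) ^ 2)
      = (1 / k) ^ 2 * ∑ p : Equiv.Perm (Fin k) × Equiv.Perm (Fin k),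
        w p.1 * w p.2 * (B₁ a₁ b₁ - B₂ (p.1 a₁) (p.2 b₁)) ^ 2 := by
    intro a₁ b₁
    have step1 : ∀ a₂, (∑ b₂, ω a₁ a₂ * ω b₁ b₂ * (B₁ a₁ b₁ - B₂ a₂ b₂) ^ 2)
        = ω a₁ a₂ * ((1 / k) * ∑ σ : Equiv.Perm (Fin k),
            w σ * (B₁ a₁ b₁ - B₂ a₂ (σ b₁)) ^ 2) := by
      intro a₂
      rw [← hsub b₁ (fun b₂ => (B₁ a₁ b₁ - B₂ a₂ b₂) ^ 2), Finset.mul_sum]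
      exact Finset.sum_congr rfl fun b₂ _ => by ring
    simp_rw [step1]
    rw [hsub a₁ (fun a₂ => (1 / k) * ∑ σ : Equiv.Perm (Fin k),
        w σ * (B₁ a₁ b₁ - B₂ a₂ (σ b₁)) ^ 2), Fintype.sum_prod_type]
    simp_rw [Finset.mul_sum]
    exact Finset.sum_congr rfl fun π _ => Finset.sum_congr rfl fun σ _ => by ring
  -- total weight
  have hwsum : (∑ p : Equiv.Perm (Fin k) × Equiv.Perm (Fin k), w p.1 * w p.2) = 1 := by
    rw [Fintype.sum_prod_type, ← Finset.sum_mul_sum, hw1, one_mul]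
  -- lower bound on the quadratic form
  have hS : (1 : ℝ) / 2 ≤ ∑ a₁, ∑ a₂, ∑ b₁, ∑ b₂,
      ω a₁ a₂ * ω b₁ b₂ * (B₁ a₁ b₁ - B₂ a₂ b₂) ^ 2 := by
    have hswap : (∑ a₁, ∑ a₂, ∑ b₁, ∑ b₂, ω a₁ a₂ * ω b₁ b₂ * (B₁ a₁ b₁ - B₂ a₂ b₂) ^ 2)
        = ∑ a₁, ∑ b₁, ∑ a₂, ∑ b₂, ω a₁ a₂ * ω b₁ b₂ * (B₁ a₁ b₁ - B₂ a₂ b₂) ^ 2 :=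
      Finset.sum_congr rfl fun a₁ _ => Finset.sum_comm
    rw [hswap]
    simp_rw [key, ← Finset.mul_sum]
    have h1 : ∀ a₁ : Fin k, (∑ b₁, ∑ p : Equiv.Perm (Fin k) × Equiv.Perm (Fin k),
        w p.1 * w p.2 * (B₁ a₁ b₁ - B₂ (p.1 a₁) (p.2 b₁)) ^ 2)
        = ∑ p : Equiv.Perm (Fin k) × Equiv.Perm (Fin k),
            w p.1 * w p.2 * ∑ b₁, (B₁ a₁ b₁ - B₂ (p.1 a₁) (p.2 b₁)) ^ 2 :=
      fun a₁ => by exact pull_sum _ _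
    simp_rw [h1]
    have h2 : (∑ a₁ : Fin k, ∑ p : Equiv.Perm (Fin k) × Equiv.Perm (Fin k),
        w p.1 * w p.2 * ∑ b₁, (B₁ a₁ b₁ - B₂ (p.1 a₁) (p.2 b₁)) ^ 2)
        = ∑ p : Equiv.Perm (Fin k) × Equiv.Perm (Fin k),
            w p.1 * w p.2 * ∑ a₁, ∑ b₁, (B₁ a₁ b₁ - B₂ (p.1 a₁) (p.2 b₁)) ^ 2 :=
      by exact pull_sum _ _
    rw [h2]
    have hbound : (1 : ℝ) / 2
        ≤ (1 / k) ^ 2 * ∑ p : Equiv.Perm (Fin k) × Equiv.Perm (Fin k),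
            w p.1 * w p.2 * ∑ a₁, ∑ b₁, (B₁ a₁ b₁ - B₂ (p.1 a₁) (p.2 b₁)) ^ 2 := by
      have hb1 : ∀ p : Equiv.Perm (Fin k) × Equiv.Perm (Fin k),
          w p.1 * w p.2 * ((k : ℝ) ^ 2 / 2)
            ≤ w p.1 * w p.2 * ∑ a₁, ∑ b₁, (B₁ a₁ b₁ - B₂ (p.1 a₁) (p.2 b₁)) ^ 2 :=
        fun p => mul_le_mul_of_nonneg_left (hsep p.1 p.2)
          (mul_nonneg (hw0 p.1) (hw0 p.2))
      have h2 := Finset.sum_le_sum (s := Finset.univ) (fun p _ => hb1 p)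
      rw [← Finset.sum_mul, hwsum, one_mul] at h2
      calc (1 : ℝ) / 2 = (1 / k) ^ 2 * ((k : ℝ) ^ 2 / 2) := by field_simp
        _ ≤ _ := by
            apply mul_le_mul_of_nonneg_left h2 (by positivity)
    exact hbound
  nlinarith [hS, sq_nonneg ε]
end
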